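/- For every subspace A of a q-matroid (E,r), r(A) - r(cyc(A)) = dim(A) - dim(cyc(A)); equivalently, the nullity of A equals the nullity of cyc(A). -/

import Mathlib

open Module Submodule

variable {K E : Type*} [Field K] [Fintype K] [AddCommGroup E] [Module K E]
  [FiniteDimensional K E]

/-- The dimension of a subspace, as an integer. -/
noncomputable def dimz {K E : Type*} [Field K] [AddCommGroup E] [Module K E]
    (A : Submodule K E) : ℤ :=
  (Module.finrank K ↥A : ℤ)

/-- `r` is the rank function of a `q`-matroid on `E`: axioms (R1)-(R3). -/
def QMat {K E : Type*} [Field K] [AddCommGroup E] [Module K E]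
    (r : Submodule K E → ℤ) : Prop :=
  (∀ A : Submodule K E, 0 ≤ r A ∧ r A ≤ dimz A) ∧
  (∀ A B : Submodule K E, A ≤ B → r A ≤ r B) ∧
  (∀ A B : Submodule K E, r (A ⊔ B) + r (A ⊓ B) ≤ r A + r B)

/-- A subspace is cyclic: every codimension-1 subspace has the same rank. -/
def QCyclic {K E : Type*} [Field K] [AddCommGroup E] [Module K E]
    (r : Submodule K E → ℤ) (A : Submodule K E) : Prop :=
  ∀ B ≤ A, Module.finrank K ↥A = Module.finrank K ↥B + 1 → r B = r A

/-- The cyclic operator: sum of all one-dimensional `x ≤ A` with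
`r (B ⊔ x) = r B` for all codimension-1 subspaces `B` of `A`. -/
noncomputable def qcyc {K E : Type*} [Field K] [AddCommGroup E] [Module K E]
    (r : Submodule K E → ℤ) (A : Submodule K E) : Submodule K E :=
  sSup {x : Submodule K E | x ≤ A ∧ Module.finrank K ↥x = 1 ∧
    ∀ B ≤ A, Module.finrank K ↥A = Module.finrank K ↥B + 1 → r (B ⊔ x) = r B}

/-- The closure operator: sum of all one-dimensional `x` with `r (A ⊔ x) = r A`. -/
noncomputable def qcl {K E : Type*} [Field K] [AddCommGroup E] [Module K E]
    (r : Submodule K E → ℤ) (A : Submodule K E) : Submodule K E :=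
  sSup {x : Submodule K E | Module.finrank K ↥x = 1 ∧ r (A ⊔ x) = r A}

/-- A subspace `F` is a flat: adding any one-dimensional space outside `F`
increases the rank. -/
def QFlat {K E : Type*} [Field K] [AddCommGroup E] [Module K E]
    (r : Submodule K E → ℤ) (F : Submodule K E) : Prop :=
  ∀ x : Submodule K E, Module.finrank K ↥x = 1 → ¬ x ≤ F → r F < r (F ⊔ x)

/-! The subspace `cyc(A)` is the intersection of `A` with those hyperplanes `B` of `A` that have
`r(B) < r(A)`. If `D ≤ A` is not contained in such a `B`, then `D ⊔ B = A`, and submodularity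
shows that passing from `D` to the hyperplane `D ⊓ B` of `D` lowers the rank by one; so the
nullity is constant on the interval `[cyc(A), A]`. -/

namespace Submodule

variable {K E : Type*} [DivisionRing K] [AddCommGroup E] [Module K E]

theorem sSup_setOf_le_and_finrank_eq_one (C : Submodule K E) :
    sSup {x : Submodule K E | x ≤ C ∧ finrank K x = 1} = C := by
  refine le_antisymm (sSup_le fun x hx => hx.1) fun v hv => ?_
  rcases eq_or_ne v 0 with rfl | hv0
  · exact zero_mem _
  refine (le_sSup ?_ : span K {v} ≤ _) (mem_span_singleton_self v)
  exact ⟨(span_singleton_le_iff_mem v C).2 hv, finrank_span_singleton hv0⟩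

theorem sup_eq_of_finrank_add_one_eq [FiniteDimensional K E] {A B D : Submodule K E}
    (hBA : B ≤ A) (hB : finrank K B + 1 = finrank K A) (hDA : D ≤ A) (hDB : ¬ D ≤ B) :
    B ⊔ D = A := by
  have := finrank_lt_finrank_of_lt (left_lt_sup.2 hDB)
  exact eq_of_le_of_finrank_le (sup_le hBA hDA) (by omega)

end Submodule

section

variable {K E : Type*} [Field K] [AddCommGroup E] [Module K E]

noncomputable def qnullity (r : Submodule K E → ℤ) (A : Submodule K E) : ℤ :=
  dimz A - r A

def rankDropHyperplanes (r : Submodule K E → ℤ) (A : Submodule K E) : Set (Submodule K E) :=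
  {B | B ≤ A ∧ finrank K B + 1 = finrank K A ∧ r B ≠ r A}

variable [FiniteDimensional K E] {r : Submodule K E → ℤ}

theorem rank_sup_eq_iff {A B x : Submodule K E} (hBA : B ≤ A)
    (hB : finrank K B + 1 = finrank K A) (hxA : x ≤ A) :
    r (B ⊔ x) = r B ↔ (r B ≠ r A → x ≤ B) := by
  by_cases hxB : x ≤ B
  · simp [hxB]
  · rw [sup_eq_of_finrank_add_one_eq hBA hB hxA hxB]
    tauto

theorem qcyc_eq_inf_sInf (r : Submodule K E → ℤ) (A : Submodule K E) :
    qcyc r A = A ⊓ sInf (rankDropHyperplanes r A) := by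
  rw [qcyc, ← sSup_setOf_le_and_finrank_eq_one (A ⊓ _)]
  congr 1
  ext x
  simp only [Set.mem_ofPred_eq, le_inf_iff, le_sInf_iff, rankDropHyperplanes]
  constructor
  · rintro ⟨hxA, hx, hB⟩
    exact ⟨⟨hxA, fun B ⟨hBA, hBd, hBr⟩ =>
      (rank_sup_eq_iff hBA hBd hxA).1 (hB B hBA hBd.symm) hBr⟩, hx⟩
  · rintro ⟨⟨hxA, hB⟩, hx⟩
    exact ⟨hxA, hx, fun B hBA hBd =>
      (rank_sup_eq_iff hBA hBd.symm hxA).2 fun hBr => hB B ⟨hBA, hBd.symm, hBr⟩⟩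

theorem qcyc_le_self (r : Submodule K E → ℤ) (A : Submodule K E) : qcyc r A ≤ A :=
  (qcyc_eq_inf_sInf r A).le.trans inf_le_left

theorem qcyc_le_of_mem_rankDropHyperplanes {A B : Submodule K E}
    (hB : B ∈ rankDropHyperplanes r A) : qcyc r A ≤ B :=
  (qcyc_eq_inf_sInf r A).le.trans (inf_le_right.trans (sInf_le hB))

end

namespace QMat

variable {K E : Type*} [Field K] [AddCommGroup E] [Module K E] [FiniteDimensional K E]
  {r : Submodule K E → ℤ}

theorem qnullity_mono (hM : QMat r) {X Y : Submodule K E} (hXY : X ≤ Y) :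
    qnullity r X ≤ qnullity r Y := by
  obtain ⟨C, hC⟩ := X.exists_isCompl
  have hsup : X ⊔ C ⊓ Y = Y := by
    rw [← sup_inf_assoc_of_le C hXY, hC.sup_eq_top, top_inf_eq]
  have hinf : X ⊓ (C ⊓ Y) = ⊥ :=
    eq_bot_iff.2 ((inf_le_inf_left X inf_le_left).trans hC.inf_eq_bot.le)
  have hdim := finrank_sup_add_finrank_inf_eq X (C ⊓ Y)
  have hsub := hM.2.2 X (C ⊓ Y)
  rw [hsup, hinf, finrank_bot] at hdim
  rw [hsup, hinf] at hsub
  have hbot := (hM.1 ⊥).1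
  have hCY := (hM.1 (C ⊓ Y)).2
  simp only [qnullity, dimz] at hCY ⊢
  omega

theorem qnullity_inf_eq (hM : QMat r) {A B D : Submodule K E} (hBA : B ≤ A)
    (hB : finrank K B + 1 = finrank K A) (hr : r B ≠ r A) (hDA : D ≤ A) (hDB : ¬ D ≤ B) :
    qnullity r (D ⊓ B) = qnullity r D := by
  refine le_antisymm (hM.qnullity_mono inf_le_left) ?_
  have hsup : D ⊔ B = A := sup_comm B D ▸ sup_eq_of_finrank_add_one_eq hBA hB hDA hDB
  have hdim := finrank_sup_add_finrank_inf_eq D B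
  have hsub := hM.2.2 D B
  have hmono := hM.2.1 B A hBA
  rw [hsup] at hdim hsub
  simp only [qnullity, dimz]
  omega

theorem qnullity_eq_qnullity_qcyc (hM : QMat r) {A D : Submodule K E}
    (hcD : qcyc r A ≤ D) (hDA : D ≤ A) : qnullity r D = qnullity r (qcyc r A) := by
  induction D using WellFoundedLT.induction with
  | _ D IH =>
  rcases hcD.eq_or_lt with rfl | hlt
  · rfl
  obtain ⟨v, hvD, hvc⟩ := SetLike.exists_of_lt hlt
  obtain ⟨B, hBmem, hvB⟩ : ∃ B ∈ rankDropHyperplanes r A, v ∉ B := by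
    simpa [qcyc_eq_inf_sInf, mem_inf, mem_sInf, hDA hvD] using hvc
  have hDB : ¬ D ≤ B := fun h => hvB (h hvD)
  have hcB := qcyc_le_of_mem_rankDropHyperplanes hBmem
  obtain ⟨hBA, hB, hr⟩ := hBmem
  rw [← hM.qnullity_inf_eq hBA hB hr hDA hDB]
  exact IH _ (inf_lt_left.2 hDB) (le_inf hcD hcB) (inf_le_left.trans hDA)

end QMat

/-- `r(A) - r(cyc(A)) = dim(A) - dim(cyc(A))`. -/
theorem rank_sub_rank_qcyc (r : Submodule K E → ℤ) (hM : QMat r)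
    (A : Submodule K E) :
    r A - r (qcyc r A) = dimz A - dimz (qcyc r A) := by
  have h := hM.qnullity_eq_qnullity_qcyc (qcyc_le_self r A) le_rfl
  simp only [qnullity] at h
  omega
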